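/- If A is an analytic subset of a Polish group G and A is non-meager in G, then the set A·A⁻¹ = {a*b⁻¹ : a, b ∈ A} is a neighborhood of the identity element of G. -/

import Mathlib

open MeasureTheory Pointwise
open Filter Set Topology PiNat

/-!
A Baire-measurable non-meagre set `A` agrees with a nonempty open set `U` up to a meagre set.
For `g ∈ U * U⁻¹` the open set `g • U ∩ U` is nonempty, hence non-meagre in a Baire space, so
`g • A ∩ A` is non-meagre as well; a point `g * c = a` of it gives `g = a * c⁻¹ ∈ A * A⁻¹`.

Analytic sets are Baire measurable because the Baire property has hulls and is preserved by the
Suslin operation. Write `A = range f` with `f : (ℕ → ℕ) → α`, and let `H l` be a Baire-measurable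
hull of `f` of the cylinder of the finite sequence `l`, taken inside its closure. The points where
the hulls do not follow the tree, `H l \ ⋃ k, H (k :: l)`, form a meagre set. Every other point
of `H []` lies in `H` along some branch `x`, hence in the closure of `f` of every cylinder around
`x`, so it equals `f x`.
-/

section Baire

variable {α : Type*} [TopologicalSpace α] {s t : Set α}

theorem isMeagre_congr (h : s =ᵇ t) : IsMeagre s ↔ IsMeagre t := by
  simp only [IsMeagre, ← eventuallyEq_univ]
  exact ⟨h.compl.symm.trans, h.compl.trans⟩

def nonMeagreLocus (s : Set α) : Set α :=
  {x | ∀ U, IsOpen U → x ∈ U → ¬IsMeagre (s ∩ U)}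

theorem isClosed_nonMeagreLocus (s : Set α) : IsClosed (nonMeagreLocus s) := by
  refine isOpen_compl_iff.1 <| isOpen_iff_forall_mem_open.2 fun x hx => ?_
  simp only [nonMeagreLocus, mem_compl_iff, mem_ofPred_eq, not_forall, not_not] at hx
  obtain ⟨U, hU, hxU, hsU⟩ := hx
  exact ⟨U, fun _ hy hy' => hy' U hU hy hsU, hU, hxU⟩

theorem nonMeagreLocus_subset_closure (s : Set α) : nonMeagreLocus s ⊆ closure s :=
  fun _ hx => mem_closure_iff.2 fun U hU hxU =>
    inter_comm s U ▸ nonempty_of_not_isMeagre (hx U hU hxU)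

theorem isMeagre_diff_nonMeagreLocus [SecondCountableTopology α] (s : Set α) :
    IsMeagre (s \ nonMeagreLocus s) := by
  obtain ⟨b, hbc, -, hb⟩ := TopologicalSpace.exists_countable_basis α
  have : s \ nonMeagreLocus s ⊆ ⋃ U ∈ {U ∈ b | IsMeagre (s ∩ U)}, s ∩ U := by
    rintro x ⟨hxs, hx⟩
    simp only [nonMeagreLocus, mem_ofPred_eq, not_forall, not_not] at hx
    obtain ⟨U, hU, hxU, hsU⟩ := hx
    obtain ⟨V, hVb, hxV, hVU⟩ := hb.isOpen_iff.1 hU x hxU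
    exact mem_biUnion ⟨hVb, hsU.mono (inter_subset_inter_right s hVU)⟩ ⟨hxs, hxV⟩
  refine IsMeagre.mono this ?_
  have : Countable {U ∈ b | IsMeagre (s ∩ U)} := (hbc.mono (sep_subset _ _)).to_subtype
  rw [biUnion_eq_iUnion]
  exact isMeagre_iUnion fun U => U.2.2

theorem baireMeasurableSet_nonMeagreLocus_union [SecondCountableTopology α] (s : Set α) :
    BaireMeasurableSet (nonMeagreLocus s ∪ s) := by
  rw [← union_sdiff_self]
  have hclosed := (isClosed_nonMeagreLocus s).isOpen_compl.baireMeasurableSet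
  exact hclosed.of_compl.union (isMeagre_diff_nonMeagreLocus s).baireMeasurableSet

/-- With `baireMeasurableSet_nonMeagreLocus_union`: `nonMeagreLocus s ∪ s` is a Baire-measurable
hull of `s`. -/
theorem isMeagre_of_subset_nonMeagreLocus_diff (ht : BaireMeasurableSet t)
    (hts : t ⊆ nonMeagreLocus s \ s) : IsMeagre t := by
  by_contra ht'
  obtain ⟨U, hU, htU⟩ := ht.residualEq_isOpen
  obtain ⟨x, hxt, hxU⟩ : (t ∩ U).Nonempty := by
    refine nonempty_of_not_isMeagre fun h => ht' ?_
    rwa [isMeagre_congr (EventuallyEq.rfl.inter htU.symm), inter_self] at h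
  have hUt : IsMeagre (U \ t) := by
    rw [isMeagre_congr (htU.symm.diff (EventuallyEq.refl _ t)), sdiff_self]
    exact .empty
  have hsU : s ∩ U ⊆ U \ t := fun _ ⟨hys, hyU⟩ => ⟨hyU, fun hyt => (hts hyt).2 hys⟩
  exact (hts hxt).1 U hU hxU (hUt.mono hsU)

theorem smul_set_residualEq {G : Type*} [Group G] [MulAction G α] [ContinuousConstSMul G α]
    (h : s =ᵇ t) (g : G) : g • s =ᵇ g • t := by
  simp only [← preimage_smul_inv]
  exact h.comp_tendsto <|
    tendsto_residual_of_isOpenMap (continuous_const_smul _) (isOpenMap_smul _)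

end Baire

namespace PiNat

section Cylinders

variable {E : ℕ → Type*} [∀ n, TopologicalSpace (E n)] [∀ n, DiscreteTopology (E n)]

theorem hasBasis_nhds_cylinder (x : ∀ n, E n) : (𝓝 x).HasBasis (fun _ => True) (cylinder x) := by
  refine ⟨fun t => ⟨fun ht => ?_, fun ⟨n, _, hn⟩ =>
    mem_of_superset ((isOpen_cylinder E x n).mem_nhds (self_mem_cylinder x n)) hn⟩⟩
  obtain ⟨_, ⟨y, n, rfl⟩, hxy, hyt⟩ := (isTopologicalBasis_cylinders E).mem_nhds_iff.1 ht
  exact ⟨n, trivial, mem_cylinder_iff_eq.1 hxy ▸ hyt⟩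

theorem eq_of_forall_mem_closure_image_cylinder {β : Type*} [TopologicalSpace β] [T2Space β]
    {f : (∀ n, E n) → β} {x : ∀ n, E n} (hf : ContinuousAt f x) {p : β}
    (hp : ∀ n, p ∈ closure (f '' cylinder x n)) : p = f x := by
  have hclust : ClusterPt p (map f (𝓝 x)) := clusterPt_iff_forall_mem_closure.2 fun s hs => by
    obtain ⟨n, -, hn⟩ := ((hasBasis_nhds_cylinder x).map f).mem_iff.1 hs
    exact closure_mono hn (hp n)
  exact t2_iff_nhds.1 ‹_› (hclust.mono hf)

end Cylinders

variable {α : Type*}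

/-- Since `res x n` lists `x (n - 1), …, x 0`, the children of `prefixCylinder l` are the
`prefixCylinder (a :: l)`. -/
def prefixCylinder (l : List α) : Set (ℕ → α) := {y | res y l.length = l}

@[simp]
theorem prefixCylinder_nil : prefixCylinder ([] : List α) = univ := by
  simp [prefixCylinder]

theorem prefixCylinder_res (x : ℕ → α) (n : ℕ) : prefixCylinder (res x n) = cylinder x n := by
  simp [prefixCylinder, cylinder_eq_res]

theorem iUnion_prefixCylinder_cons (l : List α) :
    ⋃ a, prefixCylinder (a :: l) = prefixCylinder l := by
  ext y
  simp [prefixCylinder]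

theorem exists_forall_res_of_cons {P : List α → Prop} (h₀ : P [])
    (h : ∀ l, P l → ∃ a, P (a :: l)) : ∃ x : ℕ → α, ∀ n, P (res x n) := by
  choose g hg using fun l : {l // P l} => h l.1 l.2
  let branch : ℕ → {l // P l} := fun n => Nat.rec ⟨[], h₀⟩ (fun _ l => ⟨g l :: l.1, hg l⟩) n
  have hres : ∀ n, res (fun n => g (branch n)) n = (branch n).1 := by
    intro n
    induction n with
    | zero => rfl
    | succ n ih => rw [res_succ, ih]
  exact ⟨fun n => g (branch n), fun n => hres n ▸ (branch n).2⟩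

end PiNat

theorem MeasureTheory.AnalyticSet.baireMeasurableSet {α : Type*} [TopologicalSpace α] [T2Space α]
    [SecondCountableTopology α] {A : Set α} (hA : AnalyticSet A) : BaireMeasurableSet A := by
  rw [AnalyticSet] at hA
  rcases hA with rfl | ⟨f, hf, rfl⟩
  · exact IsMeagre.empty.baireMeasurableSet
  set S : List ℕ → Set α := fun l => f '' prefixCylinder l
  set H : List ℕ → Set α := fun l => nonMeagreLocus (S l) ∪ S l
  have hSH : ∀ l, S l ⊆ ⋃ k, H (k :: l) := fun l => by
    simp only [S, ← iUnion_prefixCylinder_cons l, image_iUnion]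
    exact iUnion_mono fun k => subset_union_right
  have hH : ∀ l, BaireMeasurableSet (H l) := fun l => baireMeasurableSet_nonMeagreLocus_union _
  have hHS : ∀ l, H l ⊆ closure (S l) := fun l =>
    union_subset (nonMeagreLocus_subset_closure _) subset_closure
  set M := ⋃ l, H l \ ⋃ k, H (k :: l)
  have hM : IsMeagre M := isMeagre_iUnion fun l => by
    have hbm : BaireMeasurableSet (H l \ ⋃ k, H (k :: l)) := (hH l).diff (.iUnion fun k => hH _)
    refine isMeagre_of_subset_nonMeagreLocus_diff (s := S l) hbm ?_
    rintro p ⟨hpH, hpH'⟩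
    have hpS : p ∉ S l := fun h => hpH' (hSH l h)
    exact ⟨hpH.resolve_right hpS, hpS⟩
  have hrange : range f ⊆ H [] := by
    simp only [H, S, prefixCylinder_nil, image_univ, subset_union_right]
  have hHM : H [] \ M ⊆ range f := by
    rintro p ⟨hp, hpM⟩
    obtain ⟨x, hx⟩ := exists_forall_res_of_cons (P := (p ∈ H ·)) hp fun l hl => by
      by_contra! h
      exact hpM (mem_iUnion.2 ⟨l, hl, by simpa using h⟩)
    refine ⟨x, (eq_of_forall_mem_closure_image_cylinder hf.continuousAt fun n => ?_).symm⟩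
    rw [← prefixCylinder_res]
    exact hHS _ (hx n)
  rw [← sdiff_sdiff_cancel_left hrange]
  exact (hH []).diff (hM.mono (sdiff_subset_comm.1 hHM)).baireMeasurableSet

theorem BaireMeasurableSet.mul_inv_mem_nhds_one {G : Type*} [Group G] [TopologicalSpace G]
    [ContinuousMul G] [BaireSpace G] {A : Set G} (hA : BaireMeasurableSet A)
    (hAnm : ¬IsMeagre A) : A * A⁻¹ ∈ 𝓝 1 := by
  obtain ⟨U, hU, hAU⟩ := hA.residualEq_isOpen
  obtain ⟨u, hu⟩ := nonempty_of_not_isMeagre ((isMeagre_congr hAU).not.1 hAnm)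
  have hUU : (1 : G) ∈ U * U⁻¹ := ⟨u, hu, u⁻¹, inv_mem_inv.2 hu, mul_inv_cancel u⟩
  refine mem_of_superset (hU.mul_right.mem_nhds hUU) ?_
  rintro _ ⟨a, ha, b, hb, rfl⟩
  have hne : ((a * b) • U ∩ U).Nonempty :=
    ⟨a, ⟨b⁻¹, hb, by simp [smul_eq_mul, mul_assoc]⟩, ha⟩
  have hgA : ¬IsMeagre ((a * b) • A ∩ A) :=
    (isMeagre_congr ((smul_set_residualEq hAU (a * b)).inter hAU)).not.2
      (not_isMeagre_of_isOpen ((hU.smul _).inter hU) hne)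
  obtain ⟨_, ⟨c, hc, rfl⟩, hc'⟩ := nonempty_of_not_isMeagre hgA
  exact ⟨(a * b) • c, hc', c⁻¹, inv_mem_inv.2 hc, by simp [smul_eq_mul, mul_assoc]⟩

/-- Piccard–Pettis: if `A` is an analytic non-meager subset of a Polish group `G`,
then `A * A⁻¹` is a neighborhood of the identity. -/
theorem piccard_pettis_mul_inv {G : Type*} [Group G] [TopologicalSpace G] [IsTopologicalGroup G]
    [PolishSpace G] {A : Set G} (hA : AnalyticSet A) (hAnm : ¬ IsMeagre A) :
    A * A⁻¹ ∈ nhds (1 : G) :=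
  hA.baireMeasurableSet.mul_inv_mem_nhds_one hAnm
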